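/- arXiv:1110.4424 — 9 statements merged into one kernel-verified Lean document; each statement's English description precedes it below -/
import Mathlib

section
/- Let V be a Euclidean space and u, v ∈ V nonzero vectors such that u ≠ -c·v for all c > 0. Then the intersection of open half-spaces H_u^int ∩ H_v^int is nonempty, where H_w^int = {x ∈ V : ⟨x,w⟩ < 0}. -/
open Set

noncomputable section

def IsCone {V : Type*} [AddCommGroup V] [Module ℝ V] (C : Set V) : Prop :=
  (0 : V) ∈ C ∧ ∀ r : ℝ, 0 ≤ r → ∀ v ∈ C, r • v ∈ C

def IsConvexCone {V : Type*} [AddCommGroup V] [Module ℝ V] (C : Set V) : Prop :=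
  IsCone C ∧ ∀ u ∈ C, ∀ v ∈ C, u + v ∈ C

def IsMaxPointedCone {V : Type*} [AddCommGroup V] [Module ℝ V] (D : Set V) : Prop :=
  IsConvexCone D ∧ D ∩ (-D) = {0} ∧ D ∪ (-D) = Set.univ

def hatCone {V : Type*} [AddCommGroup V] [Module ℝ V] (X : Set V) : Set V :=
  {0} ∪ {v | ∃ r : ℝ, 0 ≤ r ∧ ∃ x ∈ X, v = r • x}

def sphereN (n : ℕ) : Set (EuclideanSpace ℝ (Fin (n + 1))) := Metric.sphere 0 1

def PhiPlus (n : ℕ) : Set (EuclideanSpace ℝ (Fin (n + 1))) :=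
  {x | x ∈ sphereN n ∧ ∃ m : Fin (n + 1), 0 < x m ∧ ∀ i, m < i → x i = 0}

def PhiMinus (n : ℕ) : Set (EuclideanSpace ℝ (Fin (n + 1))) := {x | -x ∈ PhiPlus n}

def Ln (n : ℕ) : Set (Set (EuclideanSpace ℝ (Fin (n + 1)))) :=
  {X | ∃ D, IsMaxPointedCone D ∧ X = D ∩ PhiPlus n}

/-!
Take `x = -(‖v‖ • u + ‖u‖ • v)`, minus a positive multiple of the sum of the unit vectors in the
directions of `u` and `v`. Then `⟪x, u⟫ = -‖u‖ (‖u‖ ‖v‖ + ⟪u, v⟫)`, and the equality case of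
Cauchy–Schwarz makes `‖u‖ ‖v‖ + ⟪u, v⟫` positive unless `u` is a negative multiple of `v`;
the same holds for `v` by symmetry.
-/

section HalfSpaces

variable {V : Type*} [NormedAddCommGroup V] [InnerProductSpace ℝ V]

theorem neg_norm_mul_norm_lt_real_inner {u v : V} (hu : u ≠ 0) (hv : v ≠ 0)
    (h : ∀ c : ℝ, 0 < c → u ≠ -(c • v)) : -(‖u‖ * ‖v‖) < inner ℝ u v := by
  have hv' : ‖v‖ ≠ 0 := norm_ne_zero_iff.2 hv
  have hlt : inner ℝ u (-v) < ‖u‖ * ‖-v‖ := by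
    rw [inner_lt_norm_mul_iff_real, norm_neg]
    intro heq
    refine h (‖u‖ / ‖v‖) (div_pos (norm_pos_iff.2 hu) (norm_pos_iff.2 hv)) ?_
    rw [← smul_neg, div_eq_inv_mul, mul_smul, ← heq, smul_smul, inv_mul_cancel₀ hv', one_smul]
  rw [inner_neg_right, norm_neg] at hlt
  linarith

theorem real_inner_neg_norm_smul_add_norm_smul_lt_zero {u v : V} (hu : u ≠ 0)
    (huv : -(‖u‖ * ‖v‖) < inner ℝ u v) :
    inner ℝ (-(‖v‖ • u + ‖u‖ • v)) u < 0 := by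
  have hexpand : inner ℝ (-(‖v‖ • u + ‖u‖ • v)) u = -(‖u‖ * (‖u‖ * ‖v‖ + inner ℝ u v)) := by
    rw [inner_neg_left, inner_add_left, real_inner_smul_left, real_inner_smul_left,
      real_inner_self_eq_norm_sq, real_inner_comm]
    ring
  rw [hexpand, neg_lt_zero]
  exact mul_pos (norm_pos_iff.2 hu) (by linarith)

end HalfSpaces

theorem stmt5_general {V : Type*} [NormedAddCommGroup V] [InnerProductSpace ℝ V]
    (u v : V) (hu : u ≠ 0) (hv : v ≠ 0)
    (h : ∀ c : ℝ, 0 < c → u ≠ -(c • v)) :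
    ({x : V | (inner ℝ x u : ℝ) < 0} ∩ {x : V | (inner ℝ x v : ℝ) < 0}).Nonempty := by
  have huv := neg_norm_mul_norm_lt_real_inner hu hv h
  have hvu : -(‖v‖ * ‖u‖) < inner ℝ v u := by rwa [real_inner_comm, mul_comm]
  refine ⟨-(‖v‖ • u + ‖u‖ • v), real_inner_neg_norm_smul_add_norm_smul_lt_zero hu huv, ?_⟩
  have hv_neg := real_inner_neg_norm_smul_add_norm_smul_lt_zero hv hvu
  rwa [add_comm] at hv_neg

theorem stmt5 {V : Type*} [NormedAddCommGroup V] [InnerProductSpace ℝ V]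
    [FiniteDimensional ℝ V] (u v : V) (hu : u ≠ 0) (hv : v ≠ 0)
    (h : ∀ c : ℝ, 0 < c → u ≠ -(c • v)) :
    ({x : V | (inner ℝ x u : ℝ) < 0} ∩ {x : V | (inner ℝ x v : ℝ) < 0}).Nonempty :=
  stmt5_general u v hu hv h
end
end

section
/- Let V be a finite-dimensional Euclidean space and u, v ∈ V nonzero vectors such that u ≠ -c·v for all c > 0. Then the topological closure of H_u^int ∩ H_v^int equals H_u ∩ H_v, where H_w^int = {x : ⟨x,w⟩ < 0} and H_w = {x : ⟨x,w⟩ ≤ 0}. -/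
open Set

noncomputable section

open Filter Topology

section InnerProductSpace

variable {V : Type*} [NormedAddCommGroup V] [InnerProductSpace ℝ V]

lemma inner_add_pos_of_norm_eq {a b : V} (hab : ‖a‖ = ‖b‖) (hne : a + b ≠ 0) :
    0 < (inner ℝ a (a + b) : ℝ) := by
  have hsq : ‖a + b‖ ^ 2 = 2 * (inner ℝ a (a + b) : ℝ) := by
    rw [norm_add_sq_real, inner_add_right, real_inner_self_eq_norm_sq, hab]
    ring
  have : 0 < ‖a + b‖ ^ 2 := by positivity
  linarith

/-- `‖v‖ • u` and `‖u‖ • v` have equal norms, so their sum makes an acute angle with both. -/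
lemma exists_inner_neg_and_inner_neg {u v : V} (hu : u ≠ 0) (hv : v ≠ 0)
    (h : ∀ c : ℝ, 0 < c → u ≠ -(c • v)) :
    ∃ x : V, (inner ℝ x u : ℝ) < 0 ∧ (inner ℝ x v : ℝ) < 0 := by
  have hnu : 0 < ‖u‖ := norm_pos_iff.2 hu
  have hnv : 0 < ‖v‖ := norm_pos_iff.2 hv
  have hnorm : ‖‖v‖ • u‖ = ‖‖u‖ • v‖ := by
    rw [norm_smul, norm_smul, Real.norm_of_nonneg hnu.le, Real.norm_of_nonneg hnv.le, mul_comm]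
  have hne : ‖v‖ • u + ‖u‖ • v ≠ 0 := by
    intro h0
    refine h (‖u‖ / ‖v‖) (div_pos hnu hnv) ?_
    rw [div_eq_inv_mul, mul_smul, ← smul_neg, ← eq_neg_of_add_eq_zero_left h0, smul_smul,
      inv_mul_cancel₀ hnv.ne', one_smul]
  refine ⟨-(‖v‖ • u + ‖u‖ • v), ?_, ?_⟩
  · have key := inner_add_pos_of_norm_eq hnorm hne
    rw [real_inner_smul_left] at key
    rw [inner_neg_left, real_inner_comm, neg_lt_zero]
    exact pos_of_mul_pos_right key hnv.le
  · have key := inner_add_pos_of_norm_eq hnorm.symm (by rwa [add_comm])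
    rw [real_inner_smul_left, add_comm] at key
    rw [inner_neg_left, real_inner_comm, neg_lt_zero]
    exact pos_of_mul_pos_right key hnu.le

/-- Once the open cone has a point `x₀`, every point `x` of the closed cone is the limit of
`x + t • x₀ ∈ H_u^int ∩ H_v^int` as `t → 0⁺`. -/
lemma closure_inter_setOf_inner_neg {u v x₀ : V} (hx₀u : (inner ℝ x₀ u : ℝ) < 0)
    (hx₀v : (inner ℝ x₀ v : ℝ) < 0) :
    closure ({x : V | (inner ℝ x u : ℝ) < 0} ∩ {x : V | (inner ℝ x v : ℝ) < 0}) =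
      {x : V | (inner ℝ x u : ℝ) ≤ 0} ∩ {x : V | (inner ℝ x v : ℝ) ≤ 0} := by
  have isClosed_halfspace (w : V) : IsClosed {x : V | (inner ℝ x w : ℝ) ≤ 0} :=
    isClosed_le (by fun_prop) continuous_const
  have hsub : {x : V | (inner ℝ x u : ℝ) < 0} ∩ {x : V | (inner ℝ x v : ℝ) < 0} ⊆
      {x : V | (inner ℝ x u : ℝ) ≤ 0} ∩ {x : V | (inner ℝ x v : ℝ) ≤ 0} :=
    inter_subset_inter (ofPred_subset_ofPred.2 fun _ ↦ le_of_lt)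
      (ofPred_subset_ofPred.2 fun _ ↦ le_of_lt)
  refine Subset.antisymm
    (closure_minimal hsub ((isClosed_halfspace u).inter (isClosed_halfspace v))) ?_
  rintro x ⟨hxu, hxv⟩
  have hlim : Tendsto (fun t : ℝ ↦ x + t • x₀) (𝓝[>] 0) (𝓝 x) := by
    have ht : Tendsto (fun t : ℝ ↦ t) (𝓝[>] 0) (𝓝 0) := nhdsWithin_le_nhds
    simpa using (ht.smul_const x₀).const_add x
  refine mem_closure_of_tendsto hlim ?_
  filter_upwards [self_mem_nhdsWithin] with t (ht : 0 < t)
  simp only [mem_inter_iff, mem_ofPred_eq, inner_add_left, real_inner_smul_left]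
  exact ⟨add_neg_of_nonpos_of_neg hxu (mul_neg_of_pos_of_neg ht hx₀u),
    add_neg_of_nonpos_of_neg hxv (mul_neg_of_pos_of_neg ht hx₀v)⟩

end InnerProductSpace

theorem stmt6_general {V : Type*} [NormedAddCommGroup V] [InnerProductSpace ℝ V]
    (u v : V) (hu : u ≠ 0) (hv : v ≠ 0)
    (h : ∀ c : ℝ, 0 < c → u ≠ -(c • v)) :
    closure ({x : V | (inner ℝ x u : ℝ) < 0} ∩ {x : V | (inner ℝ x v : ℝ) < 0}) =
      {x : V | (inner ℝ x u : ℝ) ≤ 0} ∩ {x : V | (inner ℝ x v : ℝ) ≤ 0} := by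
  obtain ⟨x₀, hx₀u, hx₀v⟩ := exists_inner_neg_and_inner_neg hu hv h
  exact closure_inter_setOf_inner_neg hx₀u hx₀v

theorem stmt6 {V : Type*} [NormedAddCommGroup V] [InnerProductSpace ℝ V]
    [FiniteDimensional ℝ V] (u v : V) (hu : u ≠ 0) (hv : v ≠ 0)
    (h : ∀ c : ℝ, 0 < c → u ≠ -(c • v)) :
    closure ({x : V | (inner ℝ x u : ℝ) < 0} ∩ {x : V | (inner ℝ x v : ℝ) < 0}) =
      {x : V | (inner ℝ x u : ℝ) ≤ 0} ∩ {x : V | (inner ℝ x v : ℝ) ≤ 0} :=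
  stmt6_general u v hu hv h
end
end

section
/- Let D be a maximal pointed convex cone in a finite-dimensional Euclidean space V (i.e., D is a convex cone with D ∩ (-D) = {0} and D ∪ (-D) = V), with V of dimension ≥ 1. Then there exists a nonzero v ∈ V such that D ⊆ H_v, and for any such v, the open half-space {x : ⟨x,v⟩ < 0} is contained in D and the closure of D equals H_v. -/
open Set

noncomputable section

/-! Since `D ∪ -D` is everything, `D` spans `V`, so the convex set `D` has nonempty interior; and
`0` is not an interior point, since a neighbourhood of `0` contains a pair `±u` with `u ≠ 0`,
which `D` cannot. Separating `0` from `interior D` by a functional `⟪·, v⟫` puts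
`closure D = closure (interior D)` in the half-space `H_v`. Conversely, if `D ⊆ H_v` then for
`⟪x, v⟫ < 0` we have `-x ∉ D`, hence `x ∈ D`; so `D` is squeezed between the open half-space and
its closure `H_v`. -/

open Topology
open scoped RealInnerProductSpace

section Cone

variable {V : Type*} [AddCommGroup V] [Module ℝ V] {D : Set V}

theorem IsConvexCone.convex (hD : IsConvexCone D) : Convex ℝ D :=
  fun x hx y hy a b ha hb _ => hD.2 _ (hD.1.2 a ha x hx) _ (hD.1.2 b hb y hy)

theorem IsMaxPointedCone.mem_or_neg_mem (hD : IsMaxPointedCone D) (x : V) : x ∈ D ∨ -x ∈ D :=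
  (hD.2.2.symm ▸ mem_univ x : x ∈ D ∪ -D)

theorem IsMaxPointedCone.eq_zero_of_mem_of_neg_mem (hD : IsMaxPointedCone D) {x : V}
    (hx : x ∈ D) (hnx : -x ∈ D) : x = 0 := by
  have : x ∈ D ∩ -D := ⟨hx, hnx⟩
  rwa [hD.2.1] at this

end Cone

section InnerProduct

variable {V : Type*} [NormedAddCommGroup V] [InnerProductSpace ℝ V] {D : Set V}

theorem IsMaxPointedCone.setOf_inner_neg_subset (hD : IsMaxPointedCone D) {v : V}
    (hDv : D ⊆ {x | ⟪x, v⟫ ≤ 0}) : {x | ⟪x, v⟫ < 0} ⊆ D := by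
  intro x hx
  refine (hD.mem_or_neg_mem x).resolve_right fun hnx => ?_
  have hnx' : ⟪-x, v⟫ ≤ 0 := hDv hnx
  have hx' : ⟪x, v⟫ < 0 := hx
  rw [inner_neg_left] at hnx'
  linarith

-- A nonzero functional is surjective, hence open by the Banach open mapping theorem, and
-- preimages under open continuous maps commute with closure.
theorem closure_setOf_inner_neg [CompleteSpace V] {v : V} (hv : v ≠ 0) :
    closure {x : V | ⟪x, v⟫ < 0} = {x | ⟪x, v⟫ ≤ 0} := by
  have hsurj : Function.Surjective (innerSL ℝ v) := by
    refine LinearMap.surjective_of_ne_zero (f := (innerSL ℝ v : V →ₗ[ℝ] ℝ)) fun h => hv ?_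
    simpa using LinearMap.congr_fun h v
  simp_rw [real_inner_comm v]
  have := (innerSL ℝ v).closure_preimage hsurj (Iio 0)
  rwa [closure_Iio] at this

theorem IsMaxPointedCone.closure_eq_setOf_inner_nonpos [CompleteSpace V] (hD : IsMaxPointedCone D)
    {v : V} (hv : v ≠ 0) (hDv : D ⊆ {x | ⟪x, v⟫ ≤ 0}) : closure D = {x | ⟪x, v⟫ ≤ 0} := by
  refine (closure_minimal hDv ?_).antisymm ?_
  · exact isClosed_le (continuous_id.inner continuous_const) continuous_const
  · rw [← closure_setOf_inner_neg hv]
    exact closure_mono (hD.setOf_inner_neg_subset hDv)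

theorem IsMaxPointedCone.zero_notMem_interior [Nontrivial V] (hD : IsMaxPointedCone D) :
    (0 : V) ∉ interior D := by
  intro h0
  obtain ⟨w, hw⟩ := exists_ne (0 : V)
  have hline : ∀ u : V, ∀ᶠ t : ℝ in 𝓝 0, t • u ∈ D := fun u =>
    ((continuous_id.smul continuous_const).tendsto' 0 0 (zero_smul ℝ u)).eventually_mem
      (mem_interior_iff_mem_nhds.1 h0)
  obtain ⟨t, ht, htw, hntw⟩ := ((hline w).and (hline (-w))).exists_gt
  rw [smul_neg] at hntw
  exact smul_ne_zero ht.ne' hw (hD.eq_zero_of_mem_of_neg_mem htw hntw)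

theorem IsMaxPointedCone.interior_nonempty [FiniteDimensional ℝ V] (hD : IsMaxPointedCone D) :
    (interior D).Nonempty := by
  have h0 : (0 : V) ∈ D := hD.1.1.1
  refine hD.1.convex.interior_nonempty_iff_affineSpan_eq_top.2 ?_
  rw [AffineSubspace.affineSpan_eq_top_iff_vectorSpan_eq_top_of_nonempty ℝ V V ⟨0, h0⟩,
    eq_top_iff]
  have hspan : ∀ y ∈ D, y ∈ vectorSpan ℝ D := fun y hy => by
    simpa using vsub_mem_vectorSpan ℝ hy h0
  intro x _
  rcases hD.mem_or_neg_mem x with hx | hx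
  · exact hspan x hx
  · simpa using (vectorSpan ℝ D).neg_mem (hspan _ hx)

theorem IsMaxPointedCone.exists_subset_setOf_inner_nonpos [FiniteDimensional ℝ V] [Nontrivial V]
    (hD : IsMaxPointedCone D) : ∃ v : V, v ≠ 0 ∧ D ⊆ {x | ⟪x, v⟫ ≤ 0} := by
  have hconv := hD.1.convex
  obtain ⟨f, hf⟩ :=
    geometric_hahn_banach_open_point hconv.interior isOpen_interior hD.zero_notMem_interior
  rw [map_zero] at hf
  set v := (InnerProductSpace.toDual ℝ V).symm f
  have hfv : ∀ x, f x = ⟪x, v⟫ := fun x => by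
    rw [real_inner_comm, InnerProductSpace.toDual_symm_apply]
  obtain ⟨x₀, hx₀⟩ := hD.interior_nonempty
  refine ⟨v, fun hv => ?_, fun x hx => ?_⟩
  · simpa [hfv, hv] using hf x₀ hx₀
  · have : closure (interior D) ⊆ {x | f x ≤ 0} :=
      closure_minimal (fun y hy => (hf y hy).le) (isClosed_le f.continuous continuous_const)
    rw [hconv.closure_interior_eq_closure_of_nonempty_interior ⟨x₀, hx₀⟩] at this
    simpa [hfv] using this (subset_closure hx)

end InnerProduct

theorem stmt7 {V : Type*} [NormedAddCommGroup V] [InnerProductSpace ℝ V]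
    [FiniteDimensional ℝ V] (hdim : 1 ≤ Module.finrank ℝ V)
    (D : Set V) (hD : IsMaxPointedCone D) :
    (∃ v : V, v ≠ 0 ∧ D ⊆ {x : V | (inner ℝ x v : ℝ) ≤ 0}) ∧
      ∀ v : V, v ≠ 0 → D ⊆ {x : V | (inner ℝ x v : ℝ) ≤ 0} →
        {x : V | (inner ℝ x v : ℝ) < 0} ⊆ D ∧
          closure D = {x : V | (inner ℝ x v : ℝ) ≤ 0} := by
  have : Nontrivial V := Module.nontrivial_of_finrank_pos (R := ℝ) hdim
  exact ⟨hD.exists_subset_setOf_inner_nonpos, fun v hv hDv =>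
    ⟨hD.setOf_inner_neg_subset hDv, hD.closure_eq_setOf_inner_nonpos hv hDv⟩⟩
end
end

section
/- Let D be a maximal pointed convex cone in a finite-dimensional Euclidean space V of dimension ≥ 1. If H_u and H_v are both supports of D (i.e., D ⊆ H_u and D ⊆ H_v with u, v nonzero), then H_u = H_v. That is, D has a unique supporting closed half-space. -/
open Set Filter Topology

open scoped InnerProductSpace

noncomputable section

/-!
Since `D ∪ -D = V`, every `x` outside the support `H_u` has `-x ∈ D ⊆ H_v`, so the open
half-space `{⟪x, u⟫ > 0}` lies in `{⟪x, v⟫ ≥ 0}`. Passing to the closure (`u ≠ 0`) and negating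
gives `H_u ⊆ H_v`; the reverse inclusion is symmetric.
-/

section

variable {V : Type*} [NormedAddCommGroup V] [InnerProductSpace ℝ V]

/-- `x` is the limit of `x + t • u` as `t → 0⁺`, and these points lie in the open half-space. -/
lemma inner_nonneg_of_forall_inner_pos_imp {u v x : V} (hu : u ≠ 0)
    (h : ∀ y, 0 < ⟪y, u⟫_ℝ → 0 ≤ ⟪y, v⟫_ℝ) (hx : 0 ≤ ⟪x, u⟫_ℝ) : 0 ≤ ⟪x, v⟫_ℝ := by
  have hlim : Tendsto (fun t : ℝ => ⟪x, v⟫_ℝ + t * ⟪u, v⟫_ℝ) (𝓝[>] 0) (𝓝 ⟪x, v⟫_ℝ) := by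
    have hcont : Continuous fun t : ℝ => ⟪x, v⟫_ℝ + t * ⟪u, v⟫_ℝ := by fun_prop
    simpa using (hcont.tendsto 0).mono_left nhdsWithin_le_nhds
  refine ge_of_tendsto hlim (eventually_nhdsWithin_of_forall fun t (ht : 0 < t) => ?_)
  have hpos : 0 < ⟪x + t • u, u⟫_ℝ := by
    rw [inner_add_left, real_inner_smul_left, real_inner_self_eq_norm_sq]
    have := norm_pos_iff.2 hu
    positivity
  simpa [inner_add_left, real_inner_smul_left] using h _ hpos

lemma inner_nonneg_of_inner_pos_of_union_neg_eq_univ {D : Set V} (hunion : D ∪ -D = univ)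
    {u v : V} (hDu : D ⊆ {x | ⟪x, u⟫_ℝ ≤ 0}) (hDv : D ⊆ {x | ⟪x, v⟫_ℝ ≤ 0})
    (y : V) (hy : 0 < ⟪y, u⟫_ℝ) : 0 ≤ ⟪y, v⟫_ℝ := by
  have hyD : y ∉ D := fun h => (hDu h).not_gt hy
  have hnegy : -y ∈ D := (hunion ▸ mem_univ y : y ∈ D ∪ -D).resolve_left hyD
  have : ⟪-y, v⟫_ℝ ≤ 0 := hDv hnegy
  rw [inner_neg_left] at this
  linarith

lemma halfSpace_subset_of_union_neg_eq_univ {D : Set V} (hunion : D ∪ -D = univ)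
    {u v : V} (hu : u ≠ 0) (hDu : D ⊆ {x | ⟪x, u⟫_ℝ ≤ 0}) (hDv : D ⊆ {x | ⟪x, v⟫_ℝ ≤ 0}) :
    {x | ⟪x, u⟫_ℝ ≤ 0} ⊆ {x | ⟪x, v⟫_ℝ ≤ 0} := by
  intro x hx
  have := inner_nonneg_of_forall_inner_pos_imp hu
    (inner_nonneg_of_inner_pos_of_union_neg_eq_univ hunion hDu hDv) (x := -x)
    (by simpa [inner_neg_left] using hx)
  simpa [inner_neg_left] using this

end

theorem stmt8_general {V : Type*} [NormedAddCommGroup V] [InnerProductSpace ℝ V]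
    (D : Set V) (hD : IsMaxPointedCone D) (u v : V) (hu : u ≠ 0) (hv : v ≠ 0)
    (hDu : D ⊆ {x : V | (inner ℝ x u : ℝ) ≤ 0})
    (hDv : D ⊆ {x : V | (inner ℝ x v : ℝ) ≤ 0}) :
    {x : V | (inner ℝ x u : ℝ) ≤ 0} = {x : V | (inner ℝ x v : ℝ) ≤ 0} :=
  (halfSpace_subset_of_union_neg_eq_univ hD.2.2 hu hDu hDv).antisymm
    (halfSpace_subset_of_union_neg_eq_univ hD.2.2 hv hDv hDu)

theorem stmt8 {V : Type*} [NormedAddCommGroup V] [InnerProductSpace ℝ V]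
    [FiniteDimensional ℝ V] (hdim : 1 ≤ Module.finrank ℝ V)
    (D : Set V) (hD : IsMaxPointedCone D) (u v : V) (hu : u ≠ 0) (hv : v ≠ 0)
    (hDu : D ⊆ {x : V | (inner ℝ x u : ℝ) ≤ 0})
    (hDv : D ⊆ {x : V | (inner ℝ x v : ℝ) ≤ 0}) :
    {x : V | (inner ℝ x u : ℝ) ≤ 0} = {x : V | (inner ℝ x v : ℝ) ≤ 0} :=
  stmt8_general D hD u v hu hv hDu hDv
end
end

section
/- Let V be a finite-dimensional Euclidean space of dimension n. A subset D ⊆ V is a maximal pointed convex cone if and only if there exists an ordered orthonormal basis (v_1, ..., v_n) of V such that D = {c_1 v_1 + ... + c_n v_n : c_m < 0 where m = max{i : c_i ≠ 0}} ∪ {0}. -/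
open Set

noncomputable section

def coneOfBasis {V : Type*} [AddCommGroup V] [Module ℝ V] {n : ℕ}
    (v : Fin n → V) : Set V :=
  {0} ∪ {x | ∃ c : Fin n → ℝ, x = ∑ i, c i • v i ∧
    ∃ m, c m < 0 ∧ ∀ i, m < i → c i = 0}

/-!
Reading coordinates with the last index most significant, `coneOfBasis b` is the set of vectors
whose coordinate vector is nonpositive in the colexicographic order. That order is linear and
compatible with addition and positive scaling, so this set is a maximal pointed cone.

Conversely, a maximal pointed cone `D` is convex and spans `V`, so it has nonempty interior, and
`0` is not an interior point because `D ∩ -D = {0}`. Hahn–Banach yields a unit vector `u` with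
`⟪u, d⟫ ≤ 0` on `D`; hence `D` is the open half-space `⟪u, x⟫ < 0` together with `D ∩ u^⊥`, a
maximal pointed cone in `u^⊥`. By induction on the dimension the latter is `coneOfBasis` of an
orthonormal basis of `u^⊥`, and appending `u` as the last vector gives the basis for `D`.
-/

open Module

section Colex

variable {ι : Type*} [LinearOrder ι]

instance Pi.Colex.isOrderedAddCancelMonoid {β : ι → Type*} [∀ i, AddCommMonoid (β i)]
    [∀ i, PartialOrder (β i)] [∀ i, IsOrderedCancelAddMonoid (β i)] :
    IsOrderedCancelAddMonoid (Colex (∀ i, β i)) :=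
  Pi.Lex.isOrderedAddCancelMonoid (ι := ιᵒᵈ) (α := fun i => β (OrderDual.ofDual i))

theorem toColex_nonpos_iff {α : Type*} [PartialOrder α] [Zero α] {c : ι → α} :
    toColex c ≤ 0 ↔ c = 0 ∨ ∃ m, c m < 0 ∧ ∀ i, m < i → c i = 0 := by
  rw [le_iff_eq_or_lt]
  exact or_congr_right (exists_congr fun m => and_comm)

theorem toColex_smul_nonpos {c : ι → ℝ} (hc : toColex c ≤ 0) {r : ℝ} (hr : 0 ≤ r) :
    toColex (r • c) ≤ 0 := by
  rcases hr.eq_or_lt with rfl | hr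
  · simp
  rcases toColex_nonpos_iff.1 hc with rfl | ⟨m, hm, htail⟩
  · simp
  exact toColex_nonpos_iff.2 <| .inr ⟨m, by simpa using mul_neg_of_pos_of_neg hr hm,
    fun i hi => by simp [htail i hi]⟩

theorem toColex_snoc_nonpos_iff {α : Type*} [PartialOrder α] [Zero α] {n : ℕ} {c : Fin n → α}
    {a : α} : toColex (Fin.snoc c a : Fin (n + 1) → α) ≤ 0 ↔ a < 0 ∨ a = 0 ∧ toColex c ≤ 0 := by
  simp only [toColex_nonpos_iff, funext_iff, Fin.forall_fin_succ', Fin.exists_fin_succ',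
    Fin.snoc_castSucc, Fin.snoc_last, Pi.zero_apply, Fin.castSucc_lt_castSucc_iff,
    Fin.castSucc_lt_last, (Fin.le_last _).not_gt, true_implies, false_implies, implies_true,
    and_true, ← and_assoc, exists_and_right]
  grind

theorem isMaxPointedCone_toColex_nonpos [Finite ι] :
    IsMaxPointedCone {c : ι → ℝ | toColex c ≤ 0} := by
  refine ⟨⟨⟨show toColex (0 : ι → ℝ) ≤ 0 from le_rfl, fun r hr c hc => toColex_smul_nonpos hc hr⟩,
    fun c hc d hd => show toColex c + toColex d ≤ 0 from add_nonpos hc hd⟩, ?_, ?_⟩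
  · ext c
    simp only [mem_inter_iff, mem_ofPred_eq, mem_neg, mem_singleton_iff]
    refine ⟨fun ⟨hc, hnc⟩ => ?_, ?_⟩
    · exact toColex_inj.1 (le_antisymm hc (neg_nonpos.1 hnc))
    · rintro rfl; simp
  · ext c
    simp only [mem_union, mem_ofPred_eq, mem_neg, mem_univ, iff_true]
    exact (le_total (toColex c) 0).imp_right neg_nonpos.2

end Colex

namespace IsMaxPointedCone

section Module

variable {V : Type*} [AddCommGroup V] [Module ℝ V] {D : Set V}

theorem zero_mem (hD : IsMaxPointedCone D) : (0 : V) ∈ D :=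
  hD.1.1.1

theorem mem_or_neg_mem_s9 (hD : IsMaxPointedCone D) (x : V) : x ∈ D ∨ -x ∈ D :=
  (hD.2.2 ▸ mem_univ x : x ∈ D ∪ -D)

theorem convex (hD : IsMaxPointedCone D) : Convex ℝ D :=
  fun x hx y hy a b ha hb _ => hD.1.2 _ (hD.1.1.2 a ha x hx) _ (hD.1.1.2 b hb y hy)

theorem preimage {W : Type*} [AddCommGroup W] [Module ℝ W] {C : Set W}
    (hC : IsMaxPointedCone C) {f : V →ₗ[ℝ] W} (hf : Function.Injective f) :
    IsMaxPointedCone (f ⁻¹' C) := by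
  obtain ⟨⟨⟨hzero, hsmul⟩, hadd⟩, hpointed, hmax⟩ := hC
  refine ⟨⟨⟨by simpa using hzero, fun r hr v hv => ?_⟩, fun u hu v hv => ?_⟩, ?_, ?_⟩
  · simpa using hsmul r hr _ hv
  · simpa using hadd _ hu _ hv
  · ext x
    have := Set.ext_iff.1 hpointed (f x)
    simp only [mem_inter_iff, mem_neg, mem_singleton_iff, mem_preimage, map_neg] at this ⊢
    rw [this, map_eq_zero_iff f hf]
  · ext x
    simpa [← map_neg] using Set.ext_iff.1 hmax (f x)

end Module

section Normed

variable {V : Type*} [NormedAddCommGroup V] [NormedSpace ℝ V] {D : Set V}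

theorem zero_notMem_interior_s9 [Nontrivial V] (hD : IsMaxPointedCone D) :
    (0 : V) ∉ interior D := by
  intro h
  have hD0 : D ∈ nhds (0 : V) := mem_interior_iff_mem_nhds.1 h
  have hpointed : D ∩ -D ∈ nhds (0 : V) := Filter.inter_mem hD0 (neg_mem_nhds_zero _ hD0)
  rw [hD.2.1, ← mem_interior_iff_mem_nhds, interior_singleton] at hpointed
  exact hpointed

theorem interior_nonempty_s9 [FiniteDimensional ℝ V] (hD : IsMaxPointedCone D) :
    (interior D).Nonempty := by
  rw [hD.convex.interior_nonempty_iff_affineSpan_eq_top,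
    AffineSubspace.affineSpan_eq_top_iff_vectorSpan_eq_top_of_nonempty ℝ V V ⟨0, hD.zero_mem⟩]
  refine eq_top_iff.2 fun x _ => ?_
  rcases hD.mem_or_neg_mem_s9 x with h | h
  · simpa using vsub_mem_vectorSpan ℝ h hD.zero_mem
  · simpa using vsub_mem_vectorSpan ℝ hD.zero_mem h

theorem exists_strongDual_nonpos [FiniteDimensional ℝ V] [Nontrivial V]
    (hD : IsMaxPointedCone D) : ∃ f : StrongDual ℝ V, f ≠ 0 ∧ ∀ d ∈ D, f d ≤ 0 := by
  obtain ⟨f, hf, hmax⟩ := geometric_hahn_banach_of_nonempty_interior_point hD.convex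
    hD.zero_notMem_interior_s9 hD.interior_nonempty_s9
  exact ⟨f, hf, fun d hd => by simpa using hmax d hd⟩

end Normed

end IsMaxPointedCone

section Basis

variable {V : Type*} [AddCommGroup V] [Module ℝ V]

theorem mem_coneOfBasis_iff {n : ℕ} (b : Basis (Fin n) ℝ V) {x : V} :
    x ∈ coneOfBasis ⇑b ↔ toColex (b.equivFun x) ≤ 0 := by
  rw [toColex_nonpos_iff, coneOfBasis, mem_union, mem_singleton_iff, mem_ofPred_eq,
    ← b.equivFun.map_eq_zero_iff]
  refine or_congr_right ⟨?_, fun h => ⟨_, (b.sum_equivFun x).symm, h⟩⟩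
  rintro ⟨c, rfl, h⟩
  rwa [← b.equivFun_symm_apply, LinearEquiv.apply_symm_apply]

theorem isMaxPointedCone_coneOfBasis {n : ℕ} (b : Basis (Fin n) ℝ V) :
    IsMaxPointedCone (coneOfBasis ⇑b) := by
  rw [show coneOfBasis ⇑b = b.equivFun ⁻¹' {c | toColex c ≤ 0} from
    Set.ext fun _ => mem_coneOfBasis_iff b]
  exact isMaxPointedCone_toColex_nonpos.preimage b.equivFun.injective

end Basis

section InnerProduct

open RealInnerProductSpace

variable {V : Type*} [NormedAddCommGroup V] [InnerProductSpace ℝ V]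

namespace IsMaxPointedCone

variable {D : Set V}

theorem exists_unit_inner_nonpos [FiniteDimensional ℝ V] [Nontrivial V]
    (hD : IsMaxPointedCone D) : ∃ u : V, ‖u‖ = 1 ∧ ∀ d ∈ D, ⟪u, d⟫ ≤ 0 := by
  obtain ⟨f, hf, hfD⟩ := hD.exists_strongDual_nonpos
  set y := (InnerProductSpace.toDual ℝ V).symm f
  have hy : y ≠ 0 := by simpa [y] using hf
  refine ⟨‖y‖⁻¹ • y, norm_smul_inv_norm hy, fun d hd => ?_⟩
  rw [real_inner_smul_left, InnerProductSpace.toDual_symm_apply]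
  exact mul_nonpos_of_nonneg_of_nonpos (by positivity) (hfD d hd)

theorem mem_iff_of_inner_nonpos (hD : IsMaxPointedCone D) {u : V} (hu : ∀ d ∈ D, ⟪u, d⟫ ≤ 0)
    (x : V) : x ∈ D ↔ ⟪u, x⟫ < 0 ∨ ⟪u, x⟫ = 0 ∧ x ∈ D := by
  refine ⟨fun hx => (hu x hx).lt_or_eq.imp_right fun h => ⟨h, hx⟩, ?_⟩
  rintro (hneg | ⟨-, hx⟩)
  · refine (hD.mem_or_neg_mem_s9 x).resolve_right fun h => ?_
    have := hu _ h
    rw [inner_neg_right] at this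
    linarith
  · exact hx

end IsMaxPointedCone

theorem OrthonormalBasis.mem_coneOfBasis_iff {n : ℕ} (b : OrthonormalBasis (Fin n) ℝ V) {x : V} :
    x ∈ coneOfBasis ⇑b ↔ toColex (fun i => ⟪b i, x⟫) ≤ 0 := by
  have hrepr : b.toBasis.equivFun x = fun i => ⟪b i, x⟫ := by
    ext i
    simp [b.repr_apply_apply]
  rw [← b.coe_toBasis, _root_.mem_coneOfBasis_iff, hrepr, b.coe_toBasis]

theorem orthonormal_snoc {n : ℕ} {v : Fin n → V} {u : V} (hv : Orthonormal ℝ v) (hu : ‖u‖ = 1)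
    (hvu : ∀ i, ⟪v i, u⟫ = 0) : Orthonormal ℝ (Fin.snoc v u : Fin (n + 1) → V) := by
  have huv : ∀ i, ⟪u, v i⟫ = 0 := fun i => real_inner_comm u (v i) ▸ hvu i
  rw [orthonormal_iff_ite] at hv ⊢
  simp [Fin.forall_fin_succ', hv, hvu, huv, hu, Fin.castSucc_ne_last, (Fin.castSucc_ne_last _).symm]

theorem exists_orthonormalBasis_snoc {n : ℕ} (hV : finrank ℝ V = n + 1) {u : V} (hu : ‖u‖ = 1)
    (b : OrthonormalBasis (Fin n) ℝ (ℝ ∙ u)ᗮ) :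
    ∃ B : OrthonormalBasis (Fin (n + 1)) ℝ V, ⇑B = Fin.snoc (fun i => (b i : V)) u := by
  have : FiniteDimensional ℝ V := .of_finrank_eq_succ hV
  have hon := orthonormal_snoc (b.orthonormal.comp_linearIsometry (ℝ ∙ u)ᗮ.subtypeₗᵢ) hu
    fun i => Submodule.mem_orthogonal_singleton_iff_inner_left.1 (b i).2
  have hspan := hon.linearIndependent.span_eq_top_of_card_eq_finrank' (by simp [hV])
  exact ⟨.mk hon hspan.ge, OrthonormalBasis.coe_mk _ _⟩

theorem IsMaxPointedCone.exists_orthonormalBasis_eq_coneOfBasis [FiniteDimensional ℝ V] {n : ℕ}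
    (hV : finrank ℝ V = n) {D : Set V} (hD : IsMaxPointedCone D) :
    ∃ b : OrthonormalBasis (Fin n) ℝ V, D = coneOfBasis ⇑b := by
  induction n generalizing V with
  | zero =>
    have : Subsingleton V := finrank_zero_iff.1 hV
    refine ⟨(stdOrthonormalBasis ℝ V).reindex (finCongr hV), Set.ext fun x => ?_⟩
    simp [Subsingleton.elim x 0, hD.zero_mem, coneOfBasis]
  | succ n ih =>
    have : Nontrivial V := Module.nontrivial_of_finrank_eq_succ hV
    have : Fact (finrank ℝ V = n + 1) := ⟨hV⟩
    obtain ⟨u, hu, hDu⟩ := hD.exists_unit_inner_nonpos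
    have hu0 : u ≠ 0 := by rintro rfl; simp at hu
    set W := (ℝ ∙ u)ᗮ
    obtain ⟨b, hb⟩ :=
      ih (Submodule.finrank_orthogonal_span_singleton hu0) (hD.preimage W.subtype_injective)
    obtain ⟨B, hB⟩ := exists_orthonormalBasis_snoc hV hu b
    refine ⟨B, Set.ext fun x => ?_⟩
    have hcoord : (fun i => ⟪B i, x⟫) = Fin.snoc (fun i => ⟪(b i : V), x⟫) ⟪u, x⟫ := by
      rw [hB]
      exact Fin.comp_snoc (fun y => ⟪y, x⟫) _ _
    rw [B.mem_coneOfBasis_iff, hcoord, toColex_snoc_nonpos_iff,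
      hD.mem_iff_of_inner_nonpos hDu]
    refine or_congr_right (and_congr_right fun hx => ?_)
    lift x to W using Submodule.mem_orthogonal_singleton_iff_inner_right.2 hx
    exact (Set.ext_iff.1 hb x).trans b.mem_coneOfBasis_iff

end InnerProduct

theorem stmt9 {V : Type*} [NormedAddCommGroup V] [InnerProductSpace ℝ V]
    [FiniteDimensional ℝ V] (n : ℕ) (hV : Module.finrank ℝ V = n) (D : Set V) :
    IsMaxPointedCone D ↔ ∃ b : OrthonormalBasis (Fin n) ℝ V, D = coneOfBasis ⇑b := by
  refine ⟨fun hD => hD.exists_orthonormalBasis_eq_coneOfBasis hV, ?_⟩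
  rintro ⟨b, rfl⟩
  simpa using isMaxPointedCone_coneOfBasis b.toBasis
end
end

section
/- Let V be a finite-dimensional Euclidean space of dimension n ≥ 1, and suppose (u_1,...,u_n) and (v_1,...,v_n) are ordered orthonormal bases of V determining the same maximal pointed convex cone D = {Σ c_i u_i : c_m < 0, m = max{i : c_i ≠ 0}} ∪ {0} = {Σ c_i v_i : c_m < 0, m = max{i : c_i ≠ 0}} ∪ {0}. Then u_i = v_i for all i. -/
open Set

noncomputable section

/-!
Pairing with an orthonormal family `u₁, …, uₙ` reads off coefficients, so `coneOfBasis u` is the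
set of vectors of the span whose last nonzero coordinate is negative. Its relative algebraic
interior is the open half-space `⟪uₙ, x⟫ < 0` of the span, and this half-space determines the unit
vector `uₙ`: for unit vectors `a ≠ b`, `b - a` lies on the negative side of `a` and on the positive
side of `b`. Cutting the cone with `uₙ^⊥` gives the cone of `u₁, …, uₙ₋₁`, and induction on `n`
recovers the remaining vectors.
-/

open scoped InnerProductSpace

/-- `coneOfBasis v` is, by definition, `{0} ∪ {∑ i, c i • v i | IsLexNeg c}`. -/
def IsLexNeg {n : ℕ} (c : Fin n → ℝ) : Prop :=
  ∃ m, c m < 0 ∧ ∀ i, m < i → c i = 0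

lemma isLexNeg_iff_init {n : ℕ} {c : Fin (n + 1) → ℝ} (hc : c (Fin.last n) = 0) :
    IsLexNeg c ↔ IsLexNeg (Fin.init c) := by
  constructor
  · rintro ⟨m, hm, hzero⟩
    induction m using Fin.lastCases with
    | last => exact absurd hc hm.ne
    | cast m =>
      exact ⟨m, hm, fun i hi => hzero _ (Fin.castSucc_lt_castSucc_iff.mpr hi)⟩
  · rintro ⟨m, hm, hzero⟩
    refine ⟨m.castSucc, hm, fun i hi => ?_⟩
    induction i using Fin.lastCases with
    | last => exact hc
    | cast i => exact hzero i (Fin.castSucc_lt_castSucc_iff.mp hi)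

/-- The relative algebraic interior of a cone `D` inside the subspace `D ∪ -D` that it spans. -/
def IsCorePoint {V : Type*} [AddCommGroup V] [Module ℝ V] (D : Set V) (x : V) : Prop :=
  ∀ z, (z ∈ D ∨ -z ∈ D) → ∃ ε : ℝ, 0 < ε ∧ x + ε • z ∈ D

section

variable {V : Type*} [AddCommGroup V] [Module ℝ V] {n : ℕ}

lemma zero_mem_coneOfBasis (u : Fin n → V) : (0 : V) ∈ coneOfBasis u :=
  Or.inl rfl

lemma coneOfBasis_subset_span (u : Fin n → V) :
    coneOfBasis u ⊆ Submodule.span ℝ (range u) := by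
  rintro x (rfl | ⟨c, rfl, -⟩)
  · exact zero_mem _
  · exact (Submodule.mem_span_range_iff_exists_fun ℝ).mpr ⟨c, rfl⟩

end

section

variable {V : Type*} [NormedAddCommGroup V] [InnerProductSpace ℝ V]

variable {n : ℕ} {u : Fin (n + 1) → V}

lemma inner_last_nonpos_of_mem_coneOfBasis (hu : Orthonormal ℝ u) {x : V}
    (hx : x ∈ coneOfBasis u) : ⟪u (Fin.last n), x⟫_ℝ ≤ 0 := by
  rcases hx with rfl | ⟨c, rfl, m, hm, hzero⟩
  · simp
  rw [hu.inner_right_fintype]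
  rcases (Fin.le_last m).lt_or_eq with hlt | rfl
  · exact (hzero _ hlt).le
  · exact hm.le

lemma mem_coneOfBasis_of_inner_last_neg (hu : Orthonormal ℝ u) {x : V}
    (hx : x ∈ Submodule.span ℝ (range u)) (hlast : ⟪u (Fin.last n), x⟫_ℝ < 0) :
    x ∈ coneOfBasis u := by
  obtain ⟨c, rfl⟩ := (Submodule.mem_span_range_iff_exists_fun ℝ).mp hx
  rw [hu.inner_right_fintype] at hlast
  exact Or.inr ⟨c, rfl, Fin.last n, hlast, fun i hi => absurd hi (Fin.le_last i).not_gt⟩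

lemma neg_last_mem_coneOfBasis (hu : Orthonormal ℝ u) : -u (Fin.last n) ∈ coneOfBasis u :=
  mem_coneOfBasis_of_inner_last_neg hu (neg_mem (Submodule.subset_span (mem_range_self _)))
    (by simp [inner_neg_right, hu.1])

lemma inner_last_neg_of_isCorePoint (hu : Orthonormal ℝ u) {x : V}
    (hx : IsCorePoint (coneOfBasis u) x) : ⟪u (Fin.last n), x⟫_ℝ < 0 := by
  obtain ⟨ε, hε, hmem⟩ := hx _ (Or.inr (neg_last_mem_coneOfBasis hu))
  have := inner_last_nonpos_of_mem_coneOfBasis hu hmem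
  rw [inner_add_right, real_inner_smul_right, real_inner_self_eq_norm_sq, hu.1] at this
  linarith

lemma isCorePoint_of_inner_last_neg (hu : Orthonormal ℝ u) {x : V}
    (hx : x ∈ Submodule.span ℝ (range u)) (hlast : ⟪u (Fin.last n), x⟫_ℝ < 0) :
    IsCorePoint (coneOfBasis u) x := by
  intro z hz
  have hz_span : z ∈ Submodule.span ℝ (range u) := by
    rcases hz with hz | hz
    · exact coneOfBasis_subset_span u hz
    · simpa using neg_mem (coneOfBasis_subset_span u hz)
  obtain ⟨ε, hε, hsmall⟩ := exists_pos_mul_lt (neg_pos.mpr hlast) ⟪u (Fin.last n), z⟫_ℝ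
  refine ⟨ε, hε, mem_coneOfBasis_of_inner_last_neg hu
    (add_mem hx (Submodule.smul_mem _ ε hz_span)) ?_⟩
  rw [inner_add_right, real_inner_smul_right]
  linarith

lemma last_eq_of_coneOfBasis_eq {v : Fin (n + 1) → V} (hu : Orthonormal ℝ u)
    (hv : Orthonormal ℝ v) (h : coneOfBasis u = coneOfBasis v) :
    u (Fin.last n) = v (Fin.last n) := by
  set a := u (Fin.last n)
  set b := v (Fin.last n)
  by_contra hne
  have hab : ⟪a, b⟫_ℝ < 1 := (inner_lt_one_iff_real_of_norm_eq_one (hu.1 _) (hv.1 _)).mpr hne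
  have ha_span : a ∈ Submodule.span ℝ (range u) := Submodule.subset_span (mem_range_self _)
  have hb_span : b ∈ Submodule.span ℝ (range u) := by
    have hneg := neg_last_mem_coneOfBasis hv
    rw [← h] at hneg
    simpa using neg_mem (coneOfBasis_subset_span u hneg)
  have hcore : IsCorePoint (coneOfBasis u) (b - a) :=
    isCorePoint_of_inner_last_neg hu (sub_mem hb_span ha_span) (by
      rw [inner_sub_right, real_inner_self_eq_norm_sq, hu.1]
      linarith)
  rw [h] at hcore
  have := inner_last_neg_of_isCorePoint hv hcore
  rw [inner_sub_right, real_inner_self_eq_norm_sq, hv.1, real_inner_comm] at this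
  linarith

lemma coneOfBasis_init (hu : Orthonormal ℝ u) :
    coneOfBasis (Fin.init u) = coneOfBasis u ∩ {x | ⟪u (Fin.last n), x⟫_ℝ = 0} := by
  have horth : ∀ i : Fin n, ⟪u (Fin.last n), u i.castSucc⟫_ℝ = 0 := fun i =>
    hu.2 (Fin.castSucc_lt_last i).ne'
  ext x
  constructor
  · rintro (rfl | ⟨c, rfl, hc⟩)
    · exact ⟨zero_mem_coneOfBasis u, inner_zero_right _⟩
    have hsum : ∑ i, c i • Fin.init u i = ∑ i, Fin.snoc (α := fun _ => ℝ) c 0 i • u i := by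
      simp [Fin.sum_univ_castSucc, Fin.init]
    refine ⟨Or.inr ⟨_, hsum, (isLexNeg_iff_init (by simp)).mpr (by rwa [Fin.init_snoc])⟩, ?_⟩
    simp [inner_sum, real_inner_smul_right, Fin.init, horth]
  · rintro ⟨rfl | ⟨c, rfl, hc⟩, hx⟩
    · exact zero_mem_coneOfBasis _
    have hlast : c (Fin.last n) = 0 := by
      simpa [hu.inner_right_fintype] using hx
    refine Or.inr ⟨Fin.init c, ?_, (isLexNeg_iff_init hlast).mp hc⟩
    simp [Fin.sum_univ_castSucc, hlast, Fin.init]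

end

theorem eq_of_coneOfBasis_eq {V : Type*} [NormedAddCommGroup V] [InnerProductSpace ℝ V] :
    ∀ {n : ℕ} {u v : Fin n → V}, Orthonormal ℝ u → Orthonormal ℝ v →
      coneOfBasis u = coneOfBasis v → u = v
  | 0, _, _, _, _, _ => funext fun i => i.elim0
  | n + 1, u, v, hu, hv, h => by
    have hlast := last_eq_of_coneOfBasis_eq hu hv h
    have hinit : Fin.init u = Fin.init v :=
      eq_of_coneOfBasis_eq (hu.comp _ (Fin.castSucc_injective n))
        (hv.comp _ (Fin.castSucc_injective n))
        (by rw [coneOfBasis_init hu, coneOfBasis_init hv, h, hlast])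
    rw [← Fin.snoc_init_self u, ← Fin.snoc_init_self v, hinit, hlast]

theorem stmt10_general {V : Type*} [NormedAddCommGroup V] [InnerProductSpace ℝ V]
    (n : ℕ) (u v : OrthonormalBasis (Fin n) ℝ V)
    (h : coneOfBasis ⇑u = coneOfBasis ⇑v) :
    ∀ i, u i = v i :=
  congrFun (eq_of_coneOfBasis_eq u.orthonormal v.orthonormal h)

theorem stmt10 {V : Type*} [NormedAddCommGroup V] [InnerProductSpace ℝ V]
    [FiniteDimensional ℝ V] (n : ℕ) (hn : 1 ≤ n) (hV : Module.finrank ℝ V = n)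
    (u v : OrthonormalBasis (Fin n) ℝ V)
    (h : coneOfBasis ⇑u = coneOfBasis ⇑v) :
    ∀ i, u i = v i :=
  stmt10_general n u v h
end
end

section
/- Let Φ_n^+ = {x ∈ S^n : x_m > 0 where m = max{i : x_i ≠ 0}} and let L_n = {D ∩ Φ_n^+ : D a maximal pointed convex cone in R^{n+1}}. If X ∈ L_n, then Φ_n^+ \ X ∈ L_n, and the map X ↦ Φ_n^+ \ X is an order-reversing involution on L_n (an order isomorphism from L_n to its order dual). -/
open Set

noncomputable section

lemma neg_isMaxPointedCone {V : Type*} [AddCommGroup V] [Module ℝ V] {D : Set V}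
    (h : IsMaxPointedCone D) : IsMaxPointedCone (-D) := by
  obtain ⟨⟨⟨h0, hsmul⟩, hadd⟩, hpt, hcov⟩ := h
  refine ⟨⟨⟨Set.mem_neg.2 (by rw [neg_zero]; exact h0), ?_⟩, ?_⟩, ?_, ?_⟩
  · intro r hr v hv
    have h1 : -(r • v) = r • (-v) := (_root_.smul_neg r v).symm
    have h2 : r • (-v) ∈ D := hsmul r hr (-v) (Set.mem_neg.1 hv)
    exact Set.mem_neg.2 (h1 ▸ h2)
  · intro u hu v hv
    have h1 : -(u + v) = (-u) + (-v) := neg_add u v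
    have h2 : (-u) + (-v) ∈ D := hadd (-u) (Set.mem_neg.1 hu) (-v) (Set.mem_neg.1 hv)
    exact Set.mem_neg.2 (h1 ▸ h2)
  · rw [neg_neg, inter_comm]; exact hpt
  · rw [neg_neg, union_comm]; exact hcov

theorem stmt13 (n : ℕ) :
    (∀ X ∈ Ln n, PhiPlus n \ X ∈ Ln n) ∧
    (∀ X ∈ Ln n, PhiPlus n \ (PhiPlus n \ X) = X) ∧
    (∀ X ∈ Ln n, ∀ Y ∈ Ln n, (PhiPlus n \ X ⊆ PhiPlus n \ Y ↔ Y ⊆ X)) := by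
  have hne : ∀ x ∈ PhiPlus n, x ≠ 0 := by
    rintro x ⟨-, m, hm, -⟩ rfl
    simp at hm
  have hsub : ∀ X ∈ Ln n, X ⊆ PhiPlus n := by
    rintro X ⟨D, -, rfl⟩
    exact inter_subset_right
  refine ⟨?_, ?_, ?_⟩
  · rintro X ⟨D, ⟨⟨⟨h0, hsmul⟩, hadd⟩, hpt, hcov⟩, rfl⟩
    refine ⟨-D, neg_isMaxPointedCone ⟨⟨⟨h0, hsmul⟩, hadd⟩, hpt, hcov⟩, ?_⟩
    · ext x
      simp only [mem_inter_iff, mem_diff, Set.mem_neg]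
      constructor
      · rintro ⟨hxP, hx⟩
        have hxD : x ∉ D := fun h => hx ⟨h, hxP⟩
        have hmem : x ∈ D ∪ (-D) := by rw [hcov]; trivial
        exact ⟨hmem.resolve_left hxD, hxP⟩
      · rintro ⟨hxD, hxP⟩
        refine ⟨hxP, fun h => ?_⟩
        have : x ∈ D ∩ (-D) := ⟨h.1, hxD⟩
        rw [hpt] at this
        exact hne x hxP this
  · intro X hX
    rw [diff_diff_cancel_left (hsub X hX)]
  · intro X hX Y hY
    constructor
    · intro h y hy
      by_contra hyX
      exact (h ⟨hsub Y hY hy, hyX⟩).2 hy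
    · intro h
      exact diff_subset_diff_right h
end
end

section
/- For each X ∈ L_n there is a unique maximal pointed convex cone D_X in R^{n+1} with X = D_X ∩ Φ_n^+. That is, if D and D' are maximal pointed convex cones in R^{n+1} with D ∩ Φ_n^+ = D' ∩ Φ_n^+, then D = D'. -/
/-! Off the origin, a maximal pointed cone contains exactly one of `v` and `-v`, and it is closed
under positive scaling. Every nonzero vector is a positive multiple of a point of `Φ⁺` or of `-Φ⁺`
(normalise it and look at the sign of its last nonzero coordinate), so the trace on `Φ⁺` decides
membership of every vector. -/

open Set

noncomputable section

section Cones

variable {V : Type*} [AddCommGroup V] [Module ℝ V] {C D D' S : Set V}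

lemma IsCone.smul_mem_iff (hC : IsCone C) {r : ℝ} (hr : 0 < r) {v : V} :
    r • v ∈ C ↔ v ∈ C := by
  refine ⟨fun h => ?_, hC.2 r hr.le v⟩
  simpa [smul_smul, inv_mul_cancel₀ hr.ne'] using hC.2 r⁻¹ (inv_nonneg.mpr hr.le) _ h

lemma IsMaxPointedCone.mem_iff_neg_notMem (hD : IsMaxPointedCone D) {v : V} (hv : v ≠ 0) :
    v ∈ D ↔ -v ∉ D := by
  constructor
  · intro hvD hnegD
    have : v ∈ D ∩ -D := ⟨hvD, Set.mem_neg.mpr hnegD⟩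
    exact hv (by simpa [hD.2.1] using this)
  · intro hnegD
    have : v ∈ D ∪ -D := hD.2.2 ▸ Set.mem_univ v
    exact this.resolve_right hnegD

lemma IsMaxPointedCone.eq_of_inter_eq (hD : IsMaxPointedCone D) (hD' : IsMaxPointedCone D')
    (hS : ∀ v : V, v ≠ 0 → ∃ r : ℝ, 0 < r ∧ (r • v ∈ S ∨ -(r • v) ∈ S))
    (h : D ∩ S = D' ∩ S) : D = D' := by
  have agree : ∀ x ∈ S, (x ∈ D ↔ x ∈ D') := fun x hx => by
    simpa [hx] using Set.ext_iff.mp h x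
  ext v
  rcases eq_or_ne v 0 with rfl | hv
  · exact iff_of_true hD.1.1.1 hD'.1.1.1
  obtain ⟨r, hr, hrv⟩ := hS v hv
  have hrv0 : r • v ≠ 0 := smul_ne_zero hr.ne' hv
  rw [← hD.1.1.smul_mem_iff hr, ← hD'.1.1.smul_mem_iff hr]
  rcases hrv with hpos | hneg
  · exact agree _ hpos
  · rw [hD.mem_iff_neg_notMem hrv0, hD'.mem_iff_neg_notMem hrv0, agree _ hneg]

end Cones

lemma exists_last_ne_zero {ι M : Type*} [Fintype ι] [LinearOrder ι] [Zero M] {f : ι → M}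
    (hf : f ≠ 0) : ∃ m, f m ≠ 0 ∧ ∀ i, m < i → f i = 0 := by
  classical
  obtain ⟨i, hi⟩ := Function.ne_iff.mp hf
  obtain ⟨m, hm, hmax⟩ :=
    (Finset.univ.filter (f · ≠ 0)).exists_max_image id ⟨i, by simpa using hi⟩
  refine ⟨m, by simpa using hm, fun j hj => ?_⟩
  by_contra hfj
  exact (hmax j (by simpa using hfj)).not_gt hj

lemma mem_phiPlus_or_neg_mem_of_norm_eq_one {n : ℕ} {x : EuclideanSpace ℝ (Fin (n + 1))}
    (hx : ‖x‖ = 1) : x ∈ PhiPlus n ∨ -x ∈ PhiPlus n := by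
  have hx0 : x ≠ 0 := by rintro rfl; simp at hx
  obtain ⟨m, hxm, hlast⟩ :=
    exists_last_ne_zero (f := ⇑x) fun h => hx0 (by ext i; simp [congrFun h i])
  have hsphere : ∀ y : EuclideanSpace ℝ (Fin (n + 1)), ‖y‖ = 1 → y ∈ sphereN n := fun y hy => by
    simpa [sphereN] using hy
  rcases hxm.lt_or_gt with hneg | hpos
  · exact Or.inr ⟨hsphere _ (by rwa [norm_neg]), m, by simpa using hneg,
      fun i hi => by simp [hlast i hi]⟩
  · exact Or.inl ⟨hsphere x hx, m, hpos, hlast⟩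

lemma exists_pos_smul_mem_phiPlus_or_neg_mem {n : ℕ} {v : EuclideanSpace ℝ (Fin (n + 1))}
    (hv : v ≠ 0) : ∃ r : ℝ, 0 < r ∧ (r • v ∈ PhiPlus n ∨ -(r • v) ∈ PhiPlus n) :=
  ⟨‖v‖⁻¹, inv_pos.mpr (norm_pos_iff.mpr hv),
    mem_phiPlus_or_neg_mem_of_norm_eq_one (norm_smul_inv_norm hv)⟩

theorem stmt15 (n : ℕ) (D D' : Set (EuclideanSpace ℝ (Fin (n + 1))))
    (hD : IsMaxPointedCone D) (hD' : IsMaxPointedCone D')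
    (h : D ∩ PhiPlus n = D' ∩ PhiPlus n) :
    D = D' :=
  hD.eq_of_inter_eq hD' (fun _ => exists_pos_smul_mem_phiPlus_or_neg_mem) h
end
end

section
/- Let T ∈ O(R^{n+1}) with u = T(e_{n+1}) ≠ e_{n+1}, let X = T(Φ_n^-) ∩ Φ_n^+, and let e = -e_{n+1}. Then the topological closure of X equals H_u ∩ H_e ∩ S^n, where H_w = {x : ⟨x,w⟩ ≤ 0}. -/
open Set

noncomputable section

/-!
Both `T(Φₙ⁻)` and `Φₙ⁺` are squeezed between an open and a closed hemisphere: `T(Φₙ⁻)` between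
`⟪x, u⟫ < 0` and `⟪x, u⟫ ≤ 0`, `Φₙ⁺` between `xₙ₊₁ > 0` and `xₙ₊₁ ≥ 0`. So `X` lies between the
open and the closed lune cut out by `u` and `e = -eₙ₊₁`. As `u ≠ -e`, the vector `-(u + e)` has
negative inner product with both `u` and `e`; pushing a point of the closed lune slightly along it
and renormalising lands in the open lune, so the closed lune is the closure of the open one.
-/

section Lune

variable {E : Type*} [NormedAddCommGroup E] [InnerProductSpace ℝ E]

lemma real_inner_add_left_self_of_norm_eq {u w : E} (h : ‖u‖ = ‖w‖) :
    inner ℝ (u + w) u = ‖u + w‖ ^ 2 / 2 := by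
  rw [norm_add_sq_real, inner_add_left, real_inner_self_eq_norm_sq, real_inner_comm, ← h]
  ring

lemma mem_closure_setOf_inner_neg {u w v x : E} (hvu : inner ℝ v u < 0) (hvw : inner ℝ v w < 0)
    (hxu : inner ℝ x u ≤ 0) (hxw : inner ℝ x w ≤ 0) :
    x ∈ closure {y : E | inner ℝ y u < 0 ∧ inner ℝ y w < 0} := by
  have hpath : Filter.Tendsto (fun t : ℝ => x + t • v) (nhdsWithin 0 (Ioi 0)) (nhds x) := by
    refine tendsto_nhdsWithin_of_tendsto_nhds ?_
    simpa using (show Continuous fun t : ℝ => x + t • v by fun_prop).tendsto 0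
  refine mem_closure_of_tendsto hpath (eventually_nhdsWithin_of_forall fun t (ht : 0 < t) => ?_)
  simp only [mem_ofPred_eq, inner_add_left, real_inner_smul_left]
  constructor <;> nlinarith

lemma mem_closure_inter_sphere {C : Set E} (hC : ∀ y ∈ C, ∀ r : ℝ, 0 < r → r • y ∈ C)
    (h0 : (0 : E) ∉ C) {x : E} (hx : x ∈ closure C) (hx1 : ‖x‖ = 1) :
    x ∈ closure (C ∩ Metric.sphere 0 1) := by
  have hnormalize : ContinuousAt (fun y : E => ‖y‖⁻¹ • y) x :=
    (continuous_norm.continuousAt.inv₀ (by simp [hx1])).smul continuousAt_id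
  have := mem_closure_image hnormalize hx
  simp only [hx1, inv_one, one_smul] at this
  refine closure_mono ?_ this
  rintro _ ⟨y, hy, rfl⟩
  have hy0 : y ≠ 0 := fun h => h0 (h ▸ hy)
  exact ⟨hC y hy _ (by positivity), by simp [norm_smul, hy0]⟩

theorem closure_setOf_inner_neg_inter_sphere {u w : E} (h : ‖u‖ = ‖w‖) (huw : u + w ≠ 0) :
    closure ({y : E | inner ℝ y u < 0 ∧ inner ℝ y w < 0} ∩ Metric.sphere 0 1) =
      {x | inner ℝ x u ≤ 0} ∩ {x | inner ℝ x w ≤ 0} ∩ Metric.sphere 0 1 := by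
  have hclosed : IsClosed ({x : E | inner ℝ x u ≤ 0} ∩ {x | inner ℝ x w ≤ 0} ∩ Metric.sphere 0 1) :=
    ((isClosed_le (by fun_prop) continuous_const).inter
      (isClosed_le (by fun_prop) continuous_const)).inter Metric.isClosed_sphere
  refine (closure_minimal ?_ hclosed).antisymm ?_
  · rintro y ⟨⟨hyu, hyw⟩, hy⟩
    exact ⟨⟨hyu.le, hyw.le⟩, hy⟩
  · rintro x ⟨⟨hxu, hxw⟩, hx⟩
    have hpos : 0 < ‖u + w‖ ^ 2 / 2 := by positivity
    have hvu : inner ℝ (-(u + w)) u < 0 := by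
      rw [inner_neg_left, real_inner_add_left_self_of_norm_eq h]; linarith
    have hvw : inner ℝ (-(u + w)) w < 0 := by
      rw [inner_neg_left, add_comm, real_inner_add_left_self_of_norm_eq h.symm, add_comm]
      linarith
    refine mem_closure_inter_sphere (fun y hy r hr => ?_) (by simp)
      (mem_closure_setOf_inner_neg hvu hvw hxu hxw) (by simpa using hx)
    simp only [mem_ofPred_eq, real_inner_smul_left] at hy ⊢
    exact ⟨mul_neg_of_pos_of_neg hr hy.1, mul_neg_of_pos_of_neg hr hy.2⟩

end Lune

section Hemisphere

variable {n : ℕ}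

lemma inner_single_last (x : EuclideanSpace ℝ (Fin (n + 1))) :
    inner ℝ x (EuclideanSpace.single (Fin.last n) (1 : ℝ)) = x (Fin.last n) := by
  simp [EuclideanSpace.inner_single_right]

lemma mem_phiPlus_of_last_pos {x : EuclideanSpace ℝ (Fin (n + 1))} (hx : x ∈ sphereN n)
    (hlast : 0 < x (Fin.last n)) : x ∈ PhiPlus n :=
  ⟨hx, Fin.last n, hlast, fun i hi => absurd (Fin.le_last i) hi.not_ge⟩

lemma last_nonneg_of_mem_phiPlus {x : EuclideanSpace ℝ (Fin (n + 1))} (hx : x ∈ PhiPlus n) :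
    0 ≤ x (Fin.last n) := by
  obtain ⟨-, m, hm, hzero⟩ := hx
  rcases (Fin.le_last m).eq_or_lt with rfl | hlt
  · exact hm.le
  · exact (hzero _ hlt).ge

lemma image_phiMinus (T : EuclideanSpace ℝ (Fin (n + 1)) ≃ₗᵢ[ℝ] EuclideanSpace ℝ (Fin (n + 1))) :
    T '' PhiMinus n = {x | -T.symm x ∈ PhiPlus n} :=
  T.image_eq_preimage_symm _

lemma symm_apply_last (T : EuclideanSpace ℝ (Fin (n + 1)) ≃ₗᵢ[ℝ] EuclideanSpace ℝ (Fin (n + 1)))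
    (x : EuclideanSpace ℝ (Fin (n + 1))) :
    T.symm x (Fin.last n) = inner ℝ x (T (EuclideanSpace.single (Fin.last n) (1 : ℝ))) := by
  rw [← inner_single_last, T.symm.inner_map_eq_flip, T.symm_symm]

lemma setOf_inner_neg_inter_sphereN_subset
    (T : EuclideanSpace ℝ (Fin (n + 1)) ≃ₗᵢ[ℝ] EuclideanSpace ℝ (Fin (n + 1))) :
    {y | inner ℝ y (T (EuclideanSpace.single (Fin.last n) 1)) < 0 ∧
        inner ℝ y (-EuclideanSpace.single (Fin.last n) (1 : ℝ)) < 0} ∩ sphereN n ⊆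
      T '' PhiMinus n ∩ PhiPlus n := by
  rintro y ⟨⟨hyu, hye⟩, hy⟩
  rw [inner_neg_right, inner_single_last] at hye
  refine ⟨image_phiMinus T ▸ mem_phiPlus_of_last_pos ?_ ?_,
    mem_phiPlus_of_last_pos hy (by linarith)⟩
  · simpa [sphereN] using hy
  · rw [PiLp.neg_apply, symm_apply_last]
    linarith

lemma image_phiMinus_inter_phiPlus_subset
    (T : EuclideanSpace ℝ (Fin (n + 1)) ≃ₗᵢ[ℝ] EuclideanSpace ℝ (Fin (n + 1))) :
    T '' PhiMinus n ∩ PhiPlus n ⊆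
      {x | inner ℝ x (T (EuclideanSpace.single (Fin.last n) 1)) ≤ 0} ∩
        {x | inner ℝ x (-EuclideanSpace.single (Fin.last n) (1 : ℝ)) ≤ 0} ∩ sphereN n := by
  rintro x ⟨hxT, hx⟩
  rw [image_phiMinus] at hxT
  have hxu := last_nonneg_of_mem_phiPlus hxT
  have hxe := last_nonneg_of_mem_phiPlus hx
  rw [PiLp.neg_apply, symm_apply_last] at hxu
  refine ⟨⟨show inner ℝ x _ ≤ 0 by linarith, ?_⟩, hx.1⟩
  rw [mem_ofPred_eq, inner_neg_right, inner_single_last]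
  linarith

end Hemisphere

theorem stmt16 (n : ℕ)
    (T : EuclideanSpace ℝ (Fin (n + 1)) ≃ₗᵢ[ℝ] EuclideanSpace ℝ (Fin (n + 1)))
    (u : EuclideanSpace ℝ (Fin (n + 1)))
    (hu : u = T (EuclideanSpace.single (Fin.last n) (1 : ℝ)))
    (hne : u ≠ EuclideanSpace.single (Fin.last n) (1 : ℝ))
    (X : Set (EuclideanSpace ℝ (Fin (n + 1))))
    (hX : X = (T '' PhiMinus n) ∩ PhiPlus n) :
    closure X = {x | (inner ℝ x u : ℝ) ≤ 0} ∩
      {x | (inner ℝ x (-(EuclideanSpace.single (Fin.last n) (1 : ℝ))) : ℝ) ≤ 0} ∩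
      sphereN n := by
  subst hX hu
  have hlune := closure_setOf_inner_neg_inter_sphere
    (u := T (EuclideanSpace.single (Fin.last n) 1)) (w := -EuclideanSpace.single (Fin.last n) 1)
    (by simp) (by rwa [← sub_eq_add_neg, sub_ne_zero])
  exact (closure_minimal (image_phiMinus_inter_phiPlus_subset T) (hlune ▸ isClosed_closure)).antisymm
    (hlune ▸ closure_mono (setOf_inner_neg_inter_sphereN_subset T))
end
end
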